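/- Suppose 𝒮 ⊆ ℝ is a countable, uniformly discrete set (there exists r > 0 with |s − s'| ≥ r for all distinct s, s' ∈ 𝒮), equipped with its Borel σ-algebra, and F : 𝒳 × 𝒮 → 𝒮 is measurable. Fix s₀ ∈ 𝒮 and suppose the Cesàro tightness condition holds: lim_{M→∞} limsup_{T→∞} (1/T) Σ_{k=0}^{T−1} μ{x ∈ 𝒳^ℤ : |S_k(x, s₀)| ≥ M} = 0. Then the pair process is stochastically stable: there exists a Borel probability measure v on 𝒳^ℤ × 𝒮 whose first marginal equals μ and which is Φ-invariant. -/

import Mathlib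

open MeasureTheory ProbabilityTheory Filter
open scoped ENNReal NNReal

/-- The skew-product map `Φ(x, s) = (θx, F(x₀, s))` on `𝒳^ℤ × 𝒮`, where `θ` is the left
shift; iterating it from `(x, s₀)` realizes the recursion `S_{k+1} = F(X_k, S_k)`. -/
def skewProd {𝒳 𝒮 : Type*} (F : 𝒳 × 𝒮 → 𝒮) (p : (ℤ → 𝒳) × 𝒮) : (ℤ → 𝒳) × 𝒮 :=
  (fun n => p.1 (n + 1), F (p.1 0, p.2))

/-!
A Krylov–Bogolyubov argument with setwise limits. Start the chain at `(x, s₀)` with `x ∼ μ`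
and let `ν_T` be the Cesàro average of the laws of its first `T` steps. Each `ν_T` has first
marginal `μ`, because the first coordinate of `Φ` is the `μ`-preserving shift. Along a free
ultrafilter the numbers `ν_T(E)` converge for every set `E`; the limit is finitely additive,
and it is `Φ`-invariant because `ν_T(Φ⁻¹E) - ν_T(E)` telescopes to `O(1/T)`. Since bounded
pieces of a uniformly discrete set are finite, Cesàro tightness says that the limit puts mass
at most `ε` outside finitely many states, while on a single state it is dominated by `μ` of the
section; this makes it continuous at `∅`, hence a measure. Working setwise rather than weakly is
what allows `F` to be merely measurable.
-/

open Set Topology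

theorem isSetRing_measurableSet {α : Type*} [MeasurableSpace α] :
    IsSetRing {E : Set α | MeasurableSet E} where
  empty_mem := MeasurableSet.empty
  union_mem _ _ := MeasurableSet.union
  sdiff_mem _ _ := MeasurableSet.diff

section SetwiseLim

variable {α ι : Type*} [MeasurableSpace α]

/-- A Banach limit of `i ↦ ν i E`; as `ℝ≥0∞` is compact, the limit along `U` always exists
(`tendsto_setwiseLim`), so `limUnder` never returns its junk value here. -/
noncomputable def setwiseLim (U : Ultrafilter ι) (ν : ι → Measure α) (E : Set α) : ℝ≥0∞ :=
  limUnder (U : Filter ι) fun i => ν i E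

variable (U : Ultrafilter ι) (ν : ι → Measure α)

theorem tendsto_setwiseLim (E : Set α) :
    Tendsto (fun i => ν i E) U (𝓝 (setwiseLim U ν E)) :=
  tendsto_nhds_limUnder ⟨_, (U.map fun i => ν i E).le_nhds_lim⟩

theorem setwiseLim_eq_of_tendsto {E : Set α} {a : ℝ≥0∞}
    (h : Tendsto (fun i => ν i E) U (𝓝 a)) : setwiseLim U ν E = a :=
  tendsto_nhds_unique (tendsto_setwiseLim U ν E) h

theorem setwiseLim_empty : setwiseLim U ν ∅ = 0 :=
  setwiseLim_eq_of_tendsto U ν (by simp)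

theorem setwiseLim_mono {E E' : Set α} (h : E ⊆ E') : setwiseLim U ν E ≤ setwiseLim U ν E' :=
  le_of_tendsto_of_tendsto' (tendsto_setwiseLim U ν E) (tendsto_setwiseLim U ν E')
    fun _ => measure_mono h

theorem setwiseLim_union {E E' : Set α} (hd : Disjoint E E') (hE' : MeasurableSet E') :
    setwiseLim U ν (E ∪ E') = setwiseLim U ν E + setwiseLim U ν E' :=
  setwiseLim_eq_of_tendsto U ν <| by
    simpa only [measure_union hd hE'] using
      (tendsto_setwiseLim U ν E).add (tendsto_setwiseLim U ν E')

theorem setwiseLim_union_le (E E' : Set α) :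
    setwiseLim U ν (E ∪ E') ≤ setwiseLim U ν E + setwiseLim U ν E' :=
  le_of_tendsto_of_tendsto' (tendsto_setwiseLim U ν _)
    ((tendsto_setwiseLim U ν E).add (tendsto_setwiseLim U ν E')) fun _ => measure_union_le _ _

theorem setwiseLim_biUnion_finset_le {κ : Type*} (J : Finset κ) (E : κ → Set α) :
    setwiseLim U ν (⋃ j ∈ J, E j) ≤ ∑ j ∈ J, setwiseLim U ν (E j) :=
  le_of_tendsto_of_tendsto' (tendsto_setwiseLim U ν _)
    (tendsto_finsetSum J fun j _ => tendsto_setwiseLim U ν (E j))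
    fun _ => measure_biUnion_finset_le J E

theorem setwiseLim_le_limsup {l : Filter ι} (hU : ↑U ≤ l) (E : Set α) :
    setwiseLim U ν E ≤ limsup (fun i => ν i E) l :=
  (tendsto_setwiseLim U ν E).limsup_eq.symm.le.trans (limsup_le_limsup_of_le hU)

end SetwiseLim

section Product

variable {Ω 𝒮 ι : Type*} [MeasurableSpace Ω] [MeasurableSpace 𝒮]
  (U : Ultrafilter ι) {ν : ι → Measure (Ω × 𝒮)} {μ : Measure Ω}

theorem setwiseLim_prod_univ (hν : ∀ᶠ i in (U : Filter ι), (ν i).map Prod.fst = μ)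
    {A : Set Ω} (hA : MeasurableSet A) : setwiseLim U ν (A ×ˢ univ) = μ A :=
  setwiseLim_eq_of_tendsto U ν <| tendsto_const_nhds.congr' <| hν.mono fun i hi => by
    rw [← hi, Measure.map_apply measurable_fst hA, prod_univ]

theorem setwiseLim_le_add_sum_sections (hν : ∀ᶠ i in (U : Filter ι), (ν i).map Prod.fst = μ)
    (J : Finset 𝒮) {E : Set (Ω × 𝒮)} (hE : MeasurableSet E) :
    setwiseLim U ν E ≤
      setwiseLim U ν (univ ×ˢ (↑J)ᶜ) + ∑ j ∈ J, μ ((fun x => (x, j)) ⁻¹' E) := by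
  have hcover : E ⊆ (univ ×ˢ (↑J)ᶜ) ∪ ⋃ j ∈ J, ((fun x => (x, j)) ⁻¹' E) ×ˢ univ := by
    rintro ⟨x, s⟩ hxs
    by_cases hs : s ∈ J
    · exact Or.inr (mem_iUnion₂.mpr ⟨s, hs, hxs, mem_univ s⟩)
    · exact Or.inl ⟨mem_univ x, hs⟩
  calc setwiseLim U ν E
      ≤ setwiseLim U ν (univ ×ˢ (↑J)ᶜ) +
          setwiseLim U ν (⋃ j ∈ J, ((fun x => (x, j)) ⁻¹' E) ×ˢ univ) :=
        (setwiseLim_mono U ν hcover).trans (setwiseLim_union_le U ν _ _)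
    _ ≤ _ := by
        gcongr
        exact (setwiseLim_biUnion_finset_le U ν J _).trans_eq <| Finset.sum_congr rfl fun j _ =>
          setwiseLim_prod_univ U hν (measurable_prodMk_right hE)

theorem tendsto_setwiseLim_of_antitone [IsFiniteMeasure μ]
    (hν : ∀ᶠ i in (U : Filter ι), (ν i).map Prod.fst = μ)
    (htight : ∀ ε > 0, ∃ J : Finset 𝒮, setwiseLim U ν (univ ×ˢ (↑J)ᶜ) ≤ ε)
    {s : ℕ → Set (Ω × 𝒮)} (hs : ∀ n, MeasurableSet (s n)) (hanti : Antitone s)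
    (hempty : ⋂ n, s n = ∅) :
    Tendsto (fun n => setwiseLim U ν (s n)) atTop (𝓝 0) := by
  refine ENNReal.tendsto_nhds_zero.mpr fun ε hε => ?_
  obtain ⟨J, hJ⟩ := htight (ε / 2) (ENNReal.half_pos hε.ne')
  have hsections : Tendsto (fun n => ∑ j ∈ J, μ ((fun x => (x, j)) ⁻¹' s n)) atTop (𝓝 0) := by
    rw [← Finset.sum_const_zero (s := J)]
    refine tendsto_finsetSum J fun j _ => ?_
    have h := tendsto_measure_iInter_atTop (μ := μ) (s := fun n => (fun x => (x, j)) ⁻¹' s n)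
      (fun n => (measurable_prodMk_right (hs n)).nullMeasurableSet)
      (fun m n hmn => preimage_mono (hanti hmn)) ⟨0, measure_ne_top μ _⟩
    rwa [← preimage_iInter, hempty, preimage_empty, measure_empty] at h
  filter_upwards [(ENNReal.tendsto_nhds_zero.mp hsections) (ε / 2) (ENNReal.half_pos hε.ne')]
    with n hn
  calc setwiseLim U ν (s n) ≤ ε / 2 + ε / 2 :=
        (setwiseLim_le_add_sum_sections U hν J (hs n)).trans (add_le_add hJ hn)
    _ = ε := ENNReal.add_halves ε

theorem exists_measure_eq_setwiseLim [IsFiniteMeasure μ]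
    (hν : ∀ᶠ i in (U : Filter ι), (ν i).map Prod.fst = μ)
    (htight : ∀ ε > 0, ∃ J : Finset 𝒮, setwiseLim U ν (univ ×ˢ (↑J)ᶜ) ≤ ε) :
    ∃ v : Measure (Ω × 𝒮), v.map Prod.fst = μ ∧
      ∀ E, MeasurableSet E → v E = setwiseLim U ν E := by
  have hC := isSetRing_measurableSet (α := Ω × 𝒮)
  let ℓ : AddContent ℝ≥0∞ {E : Set (Ω × 𝒮) | MeasurableSet E} :=
    hC.addContent_of_union (setwiseLim U ν) (setwiseLim_empty U ν)
      fun _ ht hd => setwiseLim_union U ν hd ht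
  have hfinite : ∀ E ∈ {E : Set (Ω × 𝒮) | MeasurableSet E}, ℓ E ≠ ∞ := by
    have huniv : setwiseLim U ν univ = μ univ := by
      rw [← univ_prod_univ, setwiseLim_prod_univ U hν .univ]
    exact fun E _ => ne_top_of_le_ne_top (huniv ▸ measure_ne_top μ univ)
      (setwiseLim_mono U ν (subset_univ E))
  let v := Measure.ofMeasurable (fun E _ => setwiseLim U ν E) (setwiseLim_empty U ν)
    fun f hf hd => addContent_iUnion_eq_sum_of_tendsto_zero hC ℓ hfinite
      (fun _ hs hanti hempty => tendsto_setwiseLim_of_antitone U hν htight hs hanti hempty)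
      hf (.iUnion hf) hd
  have hv : ∀ E, MeasurableSet E → v E = setwiseLim U ν E := fun E hE =>
    Measure.ofMeasurable_apply E hE
  refine ⟨v, Measure.ext fun A hA => ?_, hv⟩
  rw [Measure.map_apply measurable_fst hA, ← prod_univ, hv _ (hA.prod .univ),
    setwiseLim_prod_univ U hν hA]

end Product

section Cesaro

variable {α : Type*} [MeasurableSpace α]

noncomputable def cesaroAverage (Φ : α → α) (m : Measure α) (T : ℕ) : Measure α :=
  (T : ℝ≥0∞)⁻¹ • ∑ k ∈ Finset.range T, m.map Φ^[k]

variable {Φ : α → α} {m : Measure α}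

theorem cesaroAverage_apply (hΦ : Measurable Φ) (T : ℕ) {E : Set α} (hE : MeasurableSet E) :
    cesaroAverage Φ m T E = (T : ℝ≥0∞)⁻¹ * ∑ k ∈ Finset.range T, m (Φ^[k] ⁻¹' E) := by
  simp only [cesaroAverage, Measure.smul_apply, Measure.coe_finsetSum, Finset.sum_apply,
    Measure.map_apply (hΦ.iterate _) hE, smul_eq_mul]

theorem cesaroAverage_map_of_semiconj {β : Type*} [MeasurableSpace β] {π : α → β} {θ : β → β}
    {μ : Measure β} (hΦ : Measurable Φ) (hπ : Measurable π) (hπΦ : Function.Semiconj π Φ θ)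
    (hθ : MeasurePreserving θ μ μ) (hm : m.map π = μ) {T : ℕ} (hT : T ≠ 0) :
    (cesaroAverage Φ m T).map π = μ := by
  ext A hA
  have hk : ∀ k, m (Φ^[k] ⁻¹' (π ⁻¹' A)) = μ A := fun k => by
    rw [← preimage_comp, (hπΦ.iterate_right k).comp_eq, preimage_comp,
      ← Measure.map_apply hπ ((hθ.iterate k).measurable hA), hm,
      (hθ.iterate k).measure_preimage hA.nullMeasurableSet]
  rw [Measure.map_apply hπ hA, cesaroAverage_apply hΦ T (hπ hA),
    Finset.sum_congr rfl fun k _ => hk k, Finset.sum_const, Finset.card_range, nsmul_eq_mul,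
    ENNReal.inv_mul_cancel_left (Nat.cast_ne_zero.mpr hT) (ENNReal.natCast_ne_top T)]

theorem cesaroAverage_univ [IsProbabilityMeasure m] (hΦ : Measurable Φ) {T : ℕ} (hT : T ≠ 0) :
    cesaroAverage Φ m T univ = 1 := by
  simp [cesaroAverage_apply hΦ T .univ, ENNReal.inv_mul_cancel (Nat.cast_ne_zero.mpr hT)]

theorem cesaroAverage_preimage_add (hΦ : Measurable Φ) (T : ℕ) {E : Set α}
    (hE : MeasurableSet E) :
    cesaroAverage Φ m T (Φ ⁻¹' E) + (T : ℝ≥0∞)⁻¹ * m E =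
      cesaroAverage Φ m T E + (T : ℝ≥0∞)⁻¹ * m (Φ^[T] ⁻¹' E) := by
  have hsum : ∑ k ∈ Finset.range T, m (Φ^[k] ⁻¹' (Φ ⁻¹' E)) + m (Φ^[0] ⁻¹' E) =
      ∑ k ∈ Finset.range T, m (Φ^[k] ⁻¹' E) + m (Φ^[T] ⁻¹' E) := by
    simp only [← preimage_comp, ← Function.iterate_succ']
    exact (Finset.sum_range_succ' (fun k => m (Φ^[k] ⁻¹' E)) T).symm.trans
      (Finset.sum_range_succ _ T)
  rw [cesaroAverage_apply hΦ T (hΦ hE), cesaroAverage_apply hΦ T hE, ← mul_add, ← mul_add]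
  simpa using congrArg ((T : ℝ≥0∞)⁻¹ * ·) hsum

theorem setwiseLim_cesaroAverage_preimage [IsFiniteMeasure m] (hΦ : Measurable Φ)
    (U : Ultrafilter ℕ) (hU : (U : Filter ℕ) ≤ atTop) {E : Set α} (hE : MeasurableSet E) :
    setwiseLim U (cesaroAverage Φ m) (Φ ⁻¹' E) = setwiseLim U (cesaroAverage Φ m) E := by
  have hboundary : ∀ s : ℕ → Set α, Tendsto (fun T : ℕ => (T : ℝ≥0∞)⁻¹ * m (s T)) U (𝓝 0) := by
    intro s
    have h := ENNReal.Tendsto.mul_const (ENNReal.tendsto_inv_nat_nhds_zero.mono_left hU)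
      (Or.inr (measure_ne_top m univ))
    rw [zero_mul] at h
    exact tendsto_of_tendsto_of_tendsto_of_le_of_le tendsto_const_nhds h (fun _ => zero_le)
      fun T => by gcongr; exact subset_univ _
  have h := tendsto_nhds_unique
    ((tendsto_setwiseLim U _ (Φ ⁻¹' E)).add (hboundary fun _ => E))
    (((tendsto_setwiseLim U _ E).add (hboundary fun T => Φ^[T] ⁻¹' E)).congr
      fun T => (cesaroAverage_preimage_add hΦ T hE).symm)
  simpa using h

end Cesaro

theorem exists_invariant_measure_of_tight_cesaroAverage {Ω 𝒮 : Type*} [MeasurableSpace Ω]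
    [MeasurableSpace 𝒮] {μ : Measure Ω} [IsProbabilityMeasure μ] {θ : Ω → Ω}
    (hθ : MeasurePreserving θ μ μ) {Φ : Ω × 𝒮 → Ω × 𝒮} (hΦ : Measurable Φ)
    (hΦθ : Function.Semiconj Prod.fst Φ θ) {m : Measure (Ω × 𝒮)} (hm : m.map Prod.fst = μ)
    (htight : ∀ ε > 0, ∃ J : Finset 𝒮,
      limsup (fun T => cesaroAverage Φ m T (univ ×ˢ (↑J)ᶜ)) atTop ≤ ε) :
    ∃ v : Measure (Ω × 𝒮), IsProbabilityMeasure v ∧ v.map Prod.fst = μ ∧ v.map Φ = v := by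
  have : IsProbabilityMeasure (m.map Prod.fst) := hm ▸ inferInstance
  have : IsProbabilityMeasure m := Measure.isProbabilityMeasure_of_map Prod.fst
  let U := Ultrafilter.of (atTop : Filter ℕ)
  have hU : (U : Filter ℕ) ≤ atTop := Ultrafilter.of_le _
  have hmarg : ∀ᶠ T in (U : Filter ℕ), (cesaroAverage Φ m T).map Prod.fst = μ :=
    Eventually.mono (hU (eventually_ne_atTop 0)) fun _ hT =>
      cesaroAverage_map_of_semiconj hΦ measurable_fst hΦθ hθ hm hT
  obtain ⟨v, hvμ, hv⟩ := exists_measure_eq_setwiseLim U hmarg fun ε hε =>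
    (htight ε hε).imp fun _ hJ => (setwiseLim_le_limsup U _ hU _).trans hJ
  have : IsProbabilityMeasure (v.map Prod.fst) := hvμ ▸ inferInstance
  refine ⟨v, Measure.isProbabilityMeasure_of_map Prod.fst, hvμ, Measure.ext fun E hE => ?_⟩
  rw [Measure.map_apply hΦ hE, hv _ (hΦ hE), hv _ hE,
    setwiseLim_cesaroAverage_preimage hΦ U hU hE]

theorem tendsto_limsup_cesaroAverage_of_toReal {Ω 𝒮 κ : Type*} [MeasurableSpace Ω]
    [MeasurableSpace 𝒮] {Φ : Ω × 𝒮 → Ω × 𝒮} (hΦ : Measurable Φ) (μ : Measure Ω)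
    [IsProbabilityMeasure μ] (s₀ : 𝒮) {l : Filter κ} {B : κ → Set 𝒮}
    (hB : ∀ M, MeasurableSet (B M))
    (h : Tendsto (fun M => limsup (fun T : ℕ => (1 / T : ℝ) * ∑ k ∈ Finset.range T,
      (μ {x | (Φ^[k] (x, s₀)).2 ∈ B M}).toReal) atTop) l (𝓝 0)) :
    Tendsto (fun M => limsup (fun T =>
      cesaroAverage Φ (μ.map fun x => (x, s₀)) T (univ ×ˢ B M)) atTop) l (𝓝 0) := by
  have : IsProbabilityMeasure (μ.map fun x => (x, s₀)) :=
    Measure.isProbabilityMeasure_map measurable_prodMk_right.aemeasurable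
  have hle : ∀ M, ∀ᶠ T in atTop,
      cesaroAverage Φ (μ.map fun x => (x, s₀)) T (univ ×ˢ B M) ≤ (1 : ℝ≥0) := fun M =>
    (eventually_ne_atTop 0).mono fun T hT => by
      rw [ENNReal.coe_one, ← cesaroAverage_univ (m := μ.map fun x => (x, s₀)) hΦ hT]
      exact measure_mono (subset_univ _)
  have htoReal : ∀ M T, (cesaroAverage Φ (μ.map fun x => (x, s₀)) T (univ ×ˢ B M)).toReal =
      (1 / T : ℝ) * ∑ k ∈ Finset.range T, (μ {x | (Φ^[k] (x, s₀)).2 ∈ B M}).toReal := by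
    intro M T
    rw [cesaroAverage_apply hΦ T (MeasurableSet.univ.prod (hB M)), ENNReal.toReal_mul,
      ENNReal.toReal_inv, ENNReal.toReal_natCast, one_div,
      ENNReal.toReal_sum fun k _ => measure_ne_top _ _]
    simp_rw [Measure.map_apply measurable_prodMk_right
      ((hΦ.iterate _) (MeasurableSet.univ.prod (hB M))), univ_prod]
    rfl
  simpa only [← htoReal, ENNReal.ofReal_limsup_toReal (hle _),
    ENNReal.ofReal_zero] using ENNReal.tendsto_ofReal h

theorem measurable_skewProd {𝒳 𝒮 : Type*} [MeasurableSpace 𝒳] [MeasurableSpace 𝒮]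
    {F : 𝒳 × 𝒮 → 𝒮} (hF : Measurable F) : Measurable (skewProd F) := by
  unfold skewProd
  fun_prop

theorem finite_setOf_abs_lt_of_separated {S : Set ℝ} {r : ℝ} (hr : 0 < r)
    (hsep : ∀ s ∈ S, ∀ s' ∈ S, s ≠ s' → r ≤ |s - s'|) (M : ℝ) :
    {s : S | |(s : ℝ)| < M}.Finite := by
  have hinj : Function.Injective fun s : S => ⌊(s : ℝ) / r⌋ := by
    intro s s' h
    by_contra hne
    have h' := Int.abs_sub_lt_one_of_floor_eq_floor h
    rw [← sub_div, abs_div, abs_of_pos hr, div_lt_one hr] at h'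
    exact (hsep s s.2 s' s'.2 fun h => hne (Subtype.ext h)).not_gt h'
  refine Finite.of_finite_image ((finite_Icc ⌊-M / r⌋ ⌊M / r⌋).subset ?_) hinj.injOn
  rintro _ ⟨s, hs, rfl⟩
  obtain ⟨hlo, hhi⟩ := abs_lt.mp (mem_ofPred_eq ▸ hs)
  exact ⟨Int.floor_le_floor (by gcongr), Int.floor_le_floor (by gcongr)⟩

theorem stochastically_stable_of_countable_uniformly_discrete_state_general
    {𝒳 : Type*} [MeasurableSpace 𝒳]
    (μ : Measure (ℤ → 𝒳)) [IsProbabilityMeasure μ]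
    (hμ : μ.map (fun x n => x (n + 1)) = μ)
    (S : Set ℝ)
    (hSdisc : ∃ r : ℝ, 0 < r ∧ ∀ s ∈ S, ∀ s' ∈ S, s ≠ s' → r ≤ |s - s'|)
    (F : 𝒳 × S → S) (hF : Measurable F)
    (s₀ : S)
    (htight : Tendsto (fun M : ℕ =>
        limsup (fun T : ℕ => (1 / T : ℝ) * ∑ k ∈ Finset.range T,
          (μ {x | (M : ℝ) ≤ |(((skewProd F)^[k] (x, s₀)).2 : ℝ)|}).toReal) atTop)
      atTop (nhds 0)) :
    ∃ v : Measure ((ℤ → 𝒳) × S), IsProbabilityMeasure v ∧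
      v.map Prod.fst = μ ∧ v.map (skewProd F) = v := by
  obtain ⟨r, hr, hsep⟩ := hSdisc
  have hΦ := measurable_skewProd hF
  have hshift : MeasurePreserving (fun (x : ℤ → 𝒳) n => x (n + 1)) μ μ := ⟨by fun_prop, hμ⟩
  have hm : (μ.map fun x => (x, s₀)).map Prod.fst = μ := by
    rw [Measure.map_map measurable_fst measurable_prodMk_right]
    exact Measure.map_id
  have htight' := tendsto_limsup_cesaroAverage_of_toReal hΦ μ s₀
    (B := fun M : ℕ => {s : S | (M : ℝ) ≤ |(s : ℝ)|})
    (fun _ => measurableSet_le measurable_const measurable_subtype_coe.abs) htight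
  refine exists_invariant_measure_of_tight_cesaroAverage hshift hΦ (fun _ => rfl) hm
    fun ε hε => ?_
  obtain ⟨M, hM⟩ := (htight'.eventually (ge_mem_nhds hε)).exists
  refine ⟨(finite_setOf_abs_lt_of_separated hr hsep M).toFinset, ?_⟩
  simpa [compl_ofPred, not_lt] using hM

/-- if the state space is a countable uniformly discrete subset `S ⊆ ℝ`,
`F` is measurable, and the Cesàro tightness condition
`lim_{M→∞} limsup_{T→∞} (1/T) ∑_{k<T} μ{x : |S_k(x,s₀)| ≥ M} = 0` holds, then the pair
process is stochastically stable: there is a probability measure on `𝒳^ℤ × S` with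
first marginal `μ` that is invariant under the skew product `Φ`. -/
theorem stochastically_stable_of_countable_uniformly_discrete_state
    {𝒳 : Type*} [TopologicalSpace 𝒳] [PolishSpace 𝒳] [MeasurableSpace 𝒳] [BorelSpace 𝒳]
    (μ : Measure (ℤ → 𝒳)) [IsProbabilityMeasure μ]
    (hμ : μ.map (fun x n => x (n + 1)) = μ)
    (S : Set ℝ) (hScount : S.Countable)
    (hSdisc : ∃ r : ℝ, 0 < r ∧ ∀ s ∈ S, ∀ s' ∈ S, s ≠ s' → r ≤ |s - s'|)
    (F : 𝒳 × S → S) (hF : Measurable F)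
    (s₀ : S)
    (htight : Tendsto (fun M : ℕ =>
        limsup (fun T : ℕ => (1 / T : ℝ) * ∑ k ∈ Finset.range T,
          (μ {x | (M : ℝ) ≤ |(((skewProd F)^[k] (x, s₀)).2 : ℝ)|}).toReal) atTop)
      atTop (nhds 0)) :
    ∃ v : Measure ((ℤ → 𝒳) × S), IsProbabilityMeasure v ∧
      v.map Prod.fst = μ ∧ v.map (skewProd F) = v :=
  stochastically_stable_of_countable_uniformly_discrete_state_general μ hμ S hSdisc F hF s₀ htight
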